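/- If H' is a 6-partite intersecting hypergraph with 8 edges and τ(H') = 4, then H' has exactly one vertex of degree 3 in each of its 6 parts (six vertices of degree 3 total, all in distinct parts). -/

import Mathlib

def Intersecting {V : Type*} (E : Finset (Finset V)) : Prop :=
  ∀ e ∈ E, ∀ f ∈ E, ∃ v, v ∈ e ∧ v ∈ f

def IsCover {V : Type*} (E : Finset (Finset V)) (C : Finset V) : Prop :=
  ∀ e ∈ E, ∃ v ∈ C, v ∈ e

noncomputable def coverNum {V : Type*} (E : Finset (Finset V)) : ℕ :=
  sInf {n | ∃ C : Finset V, IsCover E C ∧ C.card = n}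

def Partite {V : Type*} (r : ℕ) (part : V → Fin r) (E : Finset (Finset V)) : Prop :=
  ∀ e ∈ E, ∀ i : Fin r, (e.filter (fun v => part v = i)).card = 1

open Classical in
noncomputable def deg {V : Type*} (E : Finset (Finset V)) (v : V) : ℕ :=
  (E.filter (fun e => v ∈ e)).card

/-!
Pairwise intersecting edges can be covered two at a time. Hence a vertex of degree at least 4, or
two vertices of degree 3 without a common edge, would give τ ≤ 3: all degrees are at most 3, and
the vertices of degree 3 are pairwise adjacent, so each part contains at most one of them. Since
Σ_{v ∈ e} deg v = Σ_f |e ∩ f| ≥ 6 + 7 for every edge e, every edge contains a vertex of degree 3,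
so these vertices form a cover T and |T| ≥ 4.

If part i had no vertex of degree 3, then |T| ∈ {4, 5}. Counting pairs of edges by the part in
which they meet bounds Σ_{e,f} |e ∩ f| = Σ_v deg(v)², which forces |T ∩ e| ≤ 3 for every edge e.
The traces then satisfy Σ_e |T ∩ e| = 3|T| and Σ_e |T ∩ e|² ≥ |T|(|T| + 2), with equality only if
no two edges share two vertices of T. Over eight edges this leaves only equality, with |T| - 2
traces of size 3 pairwise meeting in at most one vertex, and 4 or 5 vertices leave no room for them.
-/

open Finset

section

variable {V : Type*} {E : Finset (Finset V)}

theorem Intersecting.mono {R : Finset (Finset V)} (hE : Intersecting E) (h : R ⊆ E) :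
    Intersecting R :=
  fun e he f hf => hE e (h he) f (h hf)

theorem Intersecting.exists_isCover_card_le (hE : Intersecting E) {n : ℕ} (h : #E ≤ 2 * n) :
    ∃ C, IsCover E C ∧ #C ≤ n := by
  classical
  induction n generalizing E with
  | zero => exact ⟨∅, by simp_all [IsCover], by simp⟩
  | succ n ih =>
    obtain rfl | ⟨e, he⟩ := E.eq_empty_or_nonempty
    · exact ⟨∅, by simp [IsCover], by simp⟩
    obtain ⟨f, x, hxe, hxf, hrest⟩ :
        ∃ f, ∃ x, x ∈ e ∧ x ∈ f ∧ #((E.erase e).erase f) ≤ 2 * n := by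
      obtain hE' | ⟨f, hf⟩ := (E.erase e).eq_empty_or_nonempty
      · obtain ⟨x, hx, -⟩ := hE e he e he
        exact ⟨e, x, hx, hx, by simp [hE']⟩
      · obtain ⟨x, hxe, hxf⟩ := hE e he f (mem_of_mem_erase hf)
        refine ⟨f, x, hxe, hxf, ?_⟩
        rw [card_erase_of_mem hf, card_erase_of_mem he]
        omega
    obtain ⟨C, hC, hCn⟩ := ih (hE.mono ((erase_subset _ _).trans (erase_subset _ _))) hrest
    refine ⟨insert x C, fun g hg => ?_, (card_insert_le _ _).trans (by omega)⟩
    by_cases hge : g = e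
    · exact ⟨x, mem_insert_self _ _, hge ▸ hxe⟩
    by_cases hgf : g = f
    · exact ⟨x, mem_insert_self _ _, hgf ▸ hxf⟩
    obtain ⟨v, hv, hvg⟩ := hC g (by simp [hg, hge, hgf])
    exact ⟨v, mem_insert_of_mem hv, hvg⟩

theorem coverNum_le_card {C : Finset V} (h : IsCover E C) : coverNum E ≤ #C :=
  Nat.sInf_le ⟨C, h, rfl⟩

theorem Intersecting.coverNum_le_card_add [DecidableEq V] (hE : Intersecting E) (C : Finset V)
    {n : ℕ} (h : #{e ∈ E | ∀ v ∈ C, v ∉ e} ≤ 2 * n) : coverNum E ≤ #C + n := by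
  obtain ⟨D, hD, hDn⟩ := (hE.mono (filter_subset _ _)).exists_isCover_card_le h
  refine (coverNum_le_card (C := C ∪ D) fun e he => ?_).trans ((card_union_le _ _).trans (by omega))
  by_cases hCe : ∃ v ∈ C, v ∈ e
  · obtain ⟨v, hv, hve⟩ := hCe
    exact ⟨v, mem_union_left _ hv, hve⟩
  · push Not at hCe
    obtain ⟨v, hv, hve⟩ := hD e (mem_filter.2 ⟨he, hCe⟩)
    exact ⟨v, mem_union_right _ hv, hve⟩

theorem deg_eq_card_filter [DecidableEq V] (E : Finset (Finset V)) (v : V) :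
    deg E v = #{e ∈ E | v ∈ e} := by
  unfold deg
  congr!

theorem one_le_deg {e : Finset V} {v : V} (he : e ∈ E) (hv : v ∈ e) : 1 ≤ deg E v := by
  classical
  rw [deg_eq_card_filter]
  exact card_pos.2 ⟨e, mem_filter.2 ⟨he, hv⟩⟩

theorem sum_deg_eq_sum_card_inter [DecidableEq V] (E : Finset (Finset V)) (A : Finset V) :
    ∑ v ∈ A, deg E v = ∑ e ∈ E, #(A ∩ e) := by
  simp only [deg_eq_card_filter, card_eq_sum_ones]
  exact sum_comm' fun _ _ => by simp only [mem_filter, mem_inter]; tauto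

def vertices [DecidableEq V] (E : Finset (Finset V)) : Finset V := E.biUnion id

@[simp]
theorem mem_vertices [DecidableEq V] {v : V} : v ∈ vertices E ↔ ∃ e ∈ E, v ∈ e := by
  simp [vertices]

theorem sum_deg_sq_eq [DecidableEq V] (E : Finset (Finset V)) :
    ∑ v ∈ vertices E, deg E v ^ 2 = ∑ e ∈ E, ∑ f ∈ E, #(e ∩ f) := by
  simp_rw [← sum_deg_eq_sum_card_inter]
  calc ∑ v ∈ vertices E, deg E v ^ 2 = ∑ v ∈ vertices E, ∑ e ∈ E with v ∈ e, deg E v := by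
        simp [sq, deg_eq_card_filter]
    _ = ∑ e ∈ E, ∑ v ∈ e, deg E v := sum_comm' fun _ _ => by simp; tauto

theorem Intersecting.card_add_card_le_sum_card_inter [DecidableEq V] (hE : Intersecting E)
    {e : Finset V} (he : e ∈ E) : #e + (#E - 1) ≤ ∑ f ∈ E, #(e ∩ f) := by
  rw [← add_sum_erase _ _ he, inter_self, ← card_erase_of_mem he]
  gcongr
  simpa using card_nsmul_le_sum (E.erase e) (fun f => #(e ∩ f)) 1 fun f hf => by
    obtain ⟨v, hve, hvf⟩ := hE e he f (mem_of_mem_erase hf)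
    exact card_pos.2 ⟨v, mem_inter.2 ⟨hve, hvf⟩⟩

theorem sum_sum_card_inter_add_card [DecidableEq V] {Q : Finset V} (hQ : Q ∈ E) :
    ∑ e ∈ E, ∑ f ∈ E, #(e ∩ f) + #Q =
      ∑ e ∈ E.erase Q, ∑ f ∈ E.erase Q, #(e ∩ f) + 2 * ∑ f ∈ E, #(Q ∩ f) := by
  have hrows : ∑ e ∈ E, ∑ f ∈ E, #(e ∩ f) = ∑ f ∈ E, #(Q ∩ f) +
      ∑ e ∈ E.erase Q, (#(e ∩ Q) + ∑ f ∈ E.erase Q, #(e ∩ f)) := by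
    rw [← add_sum_erase _ _ hQ]
    exact congrArg _ (sum_congr rfl fun e _ => (add_sum_erase _ _ hQ).symm)
  have hcol : #Q + ∑ e ∈ E.erase Q, #(e ∩ Q) = ∑ f ∈ E, #(Q ∩ f) := by
    rw [← add_sum_erase _ _ hQ, inter_self]
    simp_rw [inter_comm]
  rw [hrows, sum_add_distrib]
  omega

section Counting

variable {α : Type*}

theorem sum_comp_eq_sum_range_mul_card {s : Finset α} {k : α → ℕ} {m : ℕ}
    (hk : ∀ a ∈ s, k a ≤ m) (g : ℕ → ℕ) :
    ∑ a ∈ s, g (k a) = ∑ j ∈ range (m + 1), #{a ∈ s | k a = j} * g j := by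
  rw [← sum_fiberwise_of_maps_to (g := k) (t := range (m + 1))
    fun a ha => mem_range.2 (Nat.lt_succ_of_le (hk a ha))]
  refine sum_congr rfl fun j _ => ?_
  rw [sum_congr rfl fun a ha => by rw [(mem_filter.1 ha).2], sum_const, smul_eq_mul]

theorem sum_sq_le_eighteen {s : Finset α} {d : α → ℕ} (hd : ∀ v ∈ s, 1 ≤ d v ∧ d v ≤ 3)
    (hsum : ∑ v ∈ s, d v = 8) (h3 : #{v ∈ s | d v = 3} ≤ 1) : ∑ v ∈ s, d v ^ 2 ≤ 18 := by
  have h0 : #{v ∈ s | d v = 0} = 0 := card_eq_zero.2 <| filter_eq_empty_iff.2 fun v hv => by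
    have := hd v hv; omega
  have h1 := sum_comp_eq_sum_range_mul_card (fun v hv => (hd v hv).2) id
  have h2 := sum_comp_eq_sum_range_mul_card (fun v hv => (hd v hv).2) (· ^ 2)
  simp only [sum_range_succ, sum_range_zero, id] at h1 h2
  omega

theorem sum_sq_add_card_eq {s : Finset α} {d : α → ℕ} (hd : ∀ v ∈ s, 1 ≤ d v ∧ d v ≤ 2) :
    ∑ v ∈ s, d v ^ 2 + #{v ∈ s | d v = 1} = 2 * ∑ v ∈ s, d v := by
  rw [card_filter, ← sum_add_distrib, mul_sum]
  refine sum_congr rfl fun v hv => ?_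
  obtain ⟨h1, h2⟩ := hd v hv
  interval_cases d v <;> rfl

theorem six_le_card_of_card_inter_le_one [DecidableEq α] {T A B C : Finset α} (hA : A ⊆ T)
    (hB : B ⊆ T) (hC : C ⊆ T) (hA3 : #A = 3) (hB3 : #B = 3) (hC3 : #C = 3)
    (hAB : #(A ∩ B) ≤ 1) (hAC : #(A ∩ C) ≤ 1) (hBC : #(B ∩ C) ≤ 1) : 6 ≤ #T := by
  have hABC : #((A ∪ B) ∩ C) ≤ 2 := by
    rw [union_inter_distrib_right]
    exact (card_union_le _ _).trans (by omega)
  have := card_union_add_card_inter A B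
  have := card_union_add_card_inter (A ∪ B) C
  have := card_le_card (union_subset (union_subset hA hB) hC)
  omega

end Counting

section Traces

variable [DecidableEq V] {T : Finset V}

theorem sum_card_inter_sq_eq (E : Finset (Finset V)) (T : Finset V) :
    ∑ e ∈ E, #(T ∩ e) ^ 2 = ∑ t ∈ T, ∑ u ∈ T, deg {e ∈ E | t ∈ e} u := by
  simp_rw [sum_deg_eq_sum_card_inter]
  rw [sum_comm' (t' := E) (s' := (T ∩ ·)) fun _ _ => by simp only [mem_filter, mem_inter]; tauto]
  simp [sq]

theorem deg_filter_mem_self (E : Finset (Finset V)) (t : V) :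
    deg {e ∈ E | t ∈ e} t = deg E t := by
  simp [deg_eq_card_filter, filter_filter]

theorem card_add_two_le_sum_deg (hT : ∀ t ∈ T, deg E t = 3)
    (hadj : ∀ t ∈ T, ∀ u ∈ T, ∃ e ∈ E, t ∈ e ∧ u ∈ e) {t : V} (ht : t ∈ T) :
    #T + 2 ≤ ∑ u ∈ T, deg {e ∈ E | t ∈ e} u := by
  rw [← add_sum_erase _ _ ht, deg_filter_mem_self, hT t ht]
  have := card_nsmul_le_sum (T.erase t) (fun u => deg {e ∈ E | t ∈ e} u) 1 fun u hu => by
    obtain ⟨e, he, hte, hue⟩ := hadj t ht u (mem_of_mem_erase hu)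
    exact one_le_deg (mem_filter.2 ⟨he, hte⟩) hue
  rw [card_erase_of_mem ht, smul_eq_mul, mul_one] at this
  have := card_pos.2 ⟨t, ht⟩
  omega

theorem card_add_two_lt_sum_deg (hT : ∀ t ∈ T, deg E t = 3)
    (hadj : ∀ t ∈ T, ∀ u ∈ T, ∃ e ∈ E, t ∈ e ∧ u ∈ e) {t u : V} (ht : t ∈ T) (hu : u ∈ T)
    (htu : t ≠ u) (h2 : 2 ≤ deg {e ∈ E | t ∈ e} u) :
    #T + 2 < ∑ u ∈ T, deg {e ∈ E | t ∈ e} u := by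
  rw [← add_sum_erase _ _ ht, deg_filter_mem_self, hT t ht]
  have := sum_lt_sum (s := T.erase t) (f := fun _ => 1) (fun u' hu' => by
    obtain ⟨e, he, hte, hue⟩ := hadj t ht u' (mem_of_mem_erase hu')
    exact one_le_deg (mem_filter.2 ⟨he, hte⟩) hue) ⟨u, mem_erase.2 ⟨htu.symm, hu⟩, h2⟩
  rw [sum_const, card_erase_of_mem ht, smul_eq_mul, mul_one] at this
  have := card_pos.2 ⟨t, ht⟩
  omega

theorem mul_card_add_two_le_sum_card_inter_sq (hT : ∀ t ∈ T, deg E t = 3)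
    (hadj : ∀ t ∈ T, ∀ u ∈ T, ∃ e ∈ E, t ∈ e ∧ u ∈ e) :
    #T * (#T + 2) ≤ ∑ e ∈ E, #(T ∩ e) ^ 2 := by
  rw [sum_card_inter_sq_eq]
  simpa using card_nsmul_le_sum T _ _ fun t ht => card_add_two_le_sum_deg hT hadj ht

theorem card_inter_inter_le_one (hT : ∀ t ∈ T, deg E t = 3)
    (hadj : ∀ t ∈ T, ∀ u ∈ T, ∃ e ∈ E, t ∈ e ∧ u ∈ e)
    (hsq : ∑ e ∈ E, #(T ∩ e) ^ 2 ≤ #T * (#T + 2)) {e f : Finset V} (he : e ∈ E) (hf : f ∈ E)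
    (hef : e ≠ f) : #(T ∩ e ∩ (T ∩ f)) ≤ 1 := by
  refine card_le_one.2 fun t ht u hu => by_contra fun htu => ?_
  simp only [mem_inter] at ht hu
  have h2 : 2 ≤ deg {g ∈ E | t ∈ g} u := by
    rw [deg_eq_card_filter, ← card_pair hef]
    refine card_le_card fun g hg => ?_
    rcases mem_insert.1 hg with rfl | hg
    · simp [he, ht.1.2, hu.1.2]
    · rw [mem_singleton.1 hg]
      simp [hf, ht.2.2, hu.2.2]
  have hlt := sum_lt_sum (s := T) (fun t' ht' => card_add_two_le_sum_deg hT hadj ht')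
    ⟨t, ht.1.1, card_add_two_lt_sum_deg hT hadj ht.1.1 hu.1.1 htu h2⟩
  rw [← sum_card_inter_sq_eq, sum_const, smul_eq_mul] at hlt
  exact lt_irrefl _ (hlt.trans_le hsq)

/-- With `k e = #(T ∩ e) ∈ {1, 2, 3}`, the equations `∑ k = 3 * #T` and `∑ k ^ 2 ≥ #T * (#T + 2)`
over eight edges force equality and `#T - 2` edges with `k e = 3` when `#T` is 4 or 5. -/
theorem six_le_card_of_deg_eq_three (h8 : #E = 8) (hT : ∀ t ∈ T, deg E t = 3)
    (hadj : ∀ t ∈ T, ∀ u ∈ T, ∃ e ∈ E, t ∈ e ∧ u ∈ e) (hcov : ∀ e ∈ E, 1 ≤ #(T ∩ e))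
    (hk : ∀ e ∈ E, #(T ∩ e) ≤ 3) (h4 : 4 ≤ #T) : 6 ≤ #T := by
  by_contra! h6
  have hsum : ∑ e ∈ E, #(T ∩ e) = 3 * #T := by
    rw [← sum_deg_eq_sum_card_inter, sum_congr rfl hT, sum_const, smul_eq_mul, mul_comm]
  have hsq := mul_card_add_two_le_sum_card_inter_sq hT hadj
  have h0 : #{e ∈ E | #(T ∩ e) = 0} = 0 := card_eq_zero.2 <| filter_eq_empty_iff.2 fun e he => by
    have := hcov e he; omega
  have c0 := sum_comp_eq_sum_range_mul_card hk fun _ => 1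
  have c1 := sum_comp_eq_sum_range_mul_card hk id
  have c2 := sum_comp_eq_sum_range_mul_card hk (· ^ 2)
  simp only [sum_range_succ, sum_range_zero, id, sum_const, smul_eq_mul] at c0 c1 c2
  set n := #{e ∈ E | #(T ∩ e) = 3}
  obtain hT4 | hT5 : #T = 4 ∨ #T = 5 := by omega
  · have hsq' : ∑ e ∈ E, #(T ∩ e) ^ 2 ≤ #T * (#T + 2) := by rw [hT4] at hsq ⊢; omega
    obtain ⟨e, he, f, hf, hef⟩ := one_lt_card.1 (by rw [hT4] at hsq; omega : 1 < n)
    simp only [mem_filter] at he hf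
    have := card_inter_inter_le_one hT hadj hsq' he.1 hf.1 hef
    have := card_union_add_card_inter (T ∩ e) (T ∩ f)
    have := card_le_card (union_subset (inter_subset_left (s₁ := T) (s₂ := e))
      (inter_subset_left (s₁ := T) (s₂ := f)))
    omega
  · have hsq' : ∑ e ∈ E, #(T ∩ e) ^ 2 ≤ #T * (#T + 2) := by rw [hT5] at hsq ⊢; omega
    obtain ⟨a, ha, b, hb, c, hc, hab, hac, hbc⟩ := two_lt_card.1 (by rw [hT5] at hsq; omega : 2 < n)
    simp only [mem_filter] at ha hb hc
    have := six_le_card_of_card_inter_le_one inter_subset_left inter_subset_left inter_subset_left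
      ha.2 hb.2 hc.2 (card_inter_inter_le_one hT hadj hsq' ha.1 hb.1 hab)
      (card_inter_inter_le_one hT hadj hsq' ha.1 hc.1 hac)
      (card_inter_inter_le_one hT hadj hsq' hb.1 hc.1 hbc)
    omega

end Traces

theorem Partite.card_eq {r : ℕ} {part : V → Fin r} (hp : Partite r part E) {e : Finset V}
    (he : e ∈ E) : #e = r := by
  rw [card_eq_sum_card_fiberwise (f := part) (t := univ) fun v _ => mem_coe.2 (mem_univ _)]
  simp [hp e he]

section SixPartite

variable {part : V → Fin 6}

theorem deg_le_three (hi : Intersecting E) (h8 : #E = 8) (hτ : coverNum E = 4) (v : V) :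
    deg E v ≤ 3 := by
  classical
  by_contra! h
  rw [deg_eq_card_filter] at h
  have := card_filter_add_card_filter_not (s := E) (p := (v ∈ ·))
  have := hi.coverNum_le_card_add {v} (n := 2) (by simp only [mem_singleton, forall_eq]; omega)
  simp at this
  omega

theorem exists_mem_mem_of_deg_eq_three (hi : Intersecting E) (h8 : #E = 8)
    (hτ : coverNum E = 4) {u v : V} (hu : deg E u = 3) (hv : deg E v = 3) :
    ∃ e ∈ E, u ∈ e ∧ v ∈ e := by
  classical
  by_contra! h
  rw [deg_eq_card_filter] at hu hv
  have hunion := card_union_of_disjoint (disjoint_filter.2 h)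
  rw [← filter_or] at hunion
  have := card_filter_add_card_filter_not (s := E) (p := fun e => u ∈ e ∨ v ∈ e)
  have := hi.coverNum_le_card_add {u, v} (n := 1) (by
    simp only [mem_insert, mem_singleton, forall_eq_or_imp, forall_eq, ← not_or]
    omega)
  have := card_le_two (a := u) (b := v)
  omega

theorem eq_of_deg_eq_three_of_part_eq (hp : Partite 6 part E) (hi : Intersecting E)
    (h8 : #E = 8) (hτ : coverNum E = 4) {u v : V} (hu : deg E u = 3) (hv : deg E v = 3)
    (huv : part u = part v) : u = v := by
  obtain ⟨e, he, hue, hve⟩ := exists_mem_mem_of_deg_eq_three hi h8 hτ hu hv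
  exact card_le_one.1 (hp e he (part u)).le u (by simp [hue]) v (by simp [hve, huv])

theorem exists_mem_deg_eq_three (hp : Partite 6 part E) (hi : Intersecting E) (h8 : #E = 8)
    (hτ : coverNum E = 4) {e : Finset V} (he : e ∈ E) : ∃ v ∈ e, deg E v = 3 := by
  classical
  by_contra! h
  have hrow := hi.card_add_card_le_sum_card_inter he
  have hle := sum_le_card_nsmul e (fun v => deg E v) 2 fun v hv => by
    have := deg_le_three hi h8 hτ v
    have := h v hv
    omega
  rw [← sum_deg_eq_sum_card_inter, h8, hp.card_eq he] at hrow
  rw [hp.card_eq he, smul_eq_mul] at hle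
  omega

theorem sum_deg_filter_part_eq [DecidableEq V] (hp : Partite 6 part E) (j : Fin 6) :
    ∑ v ∈ vertices E with part v = j, deg E v = #E := by
  rw [sum_deg_eq_sum_card_inter, card_eq_sum_ones]
  refine sum_congr rfl fun e he => ?_
  rw [← hp e he j]
  congr 1
  ext v
  simp only [mem_inter, mem_filter, mem_vertices]
  exact ⟨fun h => ⟨h.2, h.1.2⟩, fun h => ⟨⟨⟨e, he, h.1⟩, h.2⟩, h.1⟩⟩

/-- The left side is `∑ v, deg v ^ 2` summed part by part: every part contributes at most 18, and
part `i`, where all degrees are at most 2, contributes 16 minus its number of degree-1 vertices. -/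
theorem sum_sum_card_inter_add_card_le [DecidableEq V] (hp : Partite 6 part E)
    (hi : Intersecting E) (h8 : #E = 8) (hτ : coverNum E = 4) {i : Fin 6}
    (hi3 : ∀ v, part v = i → deg E v ≠ 3) :
    ∑ e ∈ E, ∑ f ∈ E, #(e ∩ f) + #{v ∈ vertices E | part v = i ∧ deg E v = 1} ≤ 106 := by
  have hdeg : ∀ j, ∀ v ∈ {v ∈ vertices E | part v = j}, 1 ≤ deg E v ∧ deg E v ≤ 3 := by
    intro j v hv
    obtain ⟨e, he, hve⟩ := mem_vertices.1 (mem_filter.1 hv).1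
    exact ⟨one_le_deg he hve, deg_le_three hi h8 hτ v⟩
  have hsum : ∀ j, ∑ v ∈ vertices E with part v = j, deg E v = 8 :=
    fun j => h8 ▸ sum_deg_filter_part_eq hp j
  have h18 : ∀ j, ∑ v ∈ vertices E with part v = j, deg E v ^ 2 ≤ 18 := by
    refine fun j => sum_sq_le_eighteen (hdeg j) (hsum j) (card_le_one.2 fun u hu v hv => ?_)
    simp only [mem_filter] at hu hv
    exact eq_of_deg_eq_three_of_part_eq hp hi h8 hτ hu.2 hv.2 (hu.1.2.trans hv.1.2.symm)
  have h16 := sum_sq_add_card_eq (s := {v ∈ vertices E | part v = i}) (d := deg E) fun v hv =>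
    ⟨(hdeg i v hv).1, by have := (hdeg i v hv).2; have := hi3 v (mem_filter.1 hv).2; omega⟩
  rw [hsum, filter_filter] at h16
  have := sum_le_card_nsmul (univ.erase i) _ 18 fun j _ => h18 j
  rw [card_erase_of_mem (mem_univ i), card_univ, Fintype.card_fin, smul_eq_mul] at this
  rw [← sum_deg_sq_eq, ← sum_fiberwise (vertices E) part, ← add_sum_erase _ _ (mem_univ i)]
  omega

/-- Let `w ∉ T` be the vertex of `Q` in part `i`. The row sum `∑ v ∈ Q, deg v` is at least
`deg w + 5 + 2 * #(T ∩ Q)`, while removing `Q` leaves seven pairwise intersecting 6-sets, so twice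
the row sum is at most `∑ e, ∑ f, #(e ∩ f) - 78 ≤ 28 - [deg w = 1]`. -/
theorem card_inter_le_three [DecidableEq V] (hp : Partite 6 part E) (hi : Intersecting E)
    (h8 : #E = 8) (hτ : coverNum E = 4) {i : Fin 6} (hi3 : ∀ v, part v = i → deg E v ≠ 3)
    {T : Finset V} (hT : ∀ t ∈ T, deg E t = 3) {Q : Finset V} (hQ : Q ∈ E) : #(T ∩ Q) ≤ 3 := by
  obtain ⟨w, hw⟩ := card_eq_one.1 (hp Q hQ i)
  have hwQ := mem_singleton_self w
  rw [← hw, mem_filter] at hwQ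
  have hw1 := one_le_deg hQ hwQ.1
  have hw3 := deg_le_three hi h8 hτ w
  have hwT : w ∈ Q \ T := mem_sdiff.2 ⟨hwQ.1, fun h => hi3 w hwQ.2 (hT w h)⟩
  have hrow : deg E w + 5 + 2 * #(T ∩ Q) ≤ ∑ v ∈ Q, deg E v := by
    rw [← sum_inter_add_sum_sdiff Q T, sum_congr rfl fun v hv => hT v (mem_inter.1 hv).2,
      ← add_sum_erase _ _ hwT, sum_const, smul_eq_mul, inter_comm]
    have h1 := card_nsmul_le_sum ((Q \ T).erase w) (fun v => deg E v) 1 fun v hv =>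
      one_le_deg hQ (mem_sdiff.1 (mem_of_mem_erase hv)).1
    rw [card_erase_of_mem hwT, smul_eq_mul, mul_one] at h1
    have := card_sdiff_add_card_inter Q T
    have := hp.card_eq hQ
    omega
  have hrest : 84 ≤ ∑ e ∈ E.erase Q, ∑ f ∈ E.erase Q, #(e ∩ f) := by
    have := card_nsmul_le_sum (E.erase Q) (fun e => ∑ f ∈ E.erase Q, #(e ∩ f)) 12 fun e he => by
      have := (hi.mono (erase_subset Q E)).card_add_card_le_sum_card_inter he
      rwa [hp.card_eq (mem_of_mem_erase he), card_erase_of_mem hQ, h8] at this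
    rwa [card_erase_of_mem hQ, h8, smul_eq_mul] at this
  have hn1 : deg E w = 1 → 1 ≤ #{v ∈ vertices E | part v = i ∧ deg E v = 1} := fun h1 =>
    card_pos.2 ⟨w, mem_filter.2 ⟨mem_vertices.2 ⟨Q, hQ, hwQ.1⟩, hwQ.2, h1⟩⟩
  have hS := sum_sum_card_inter_add_card_le hp hi h8 hτ hi3
  have hsplit := sum_sum_card_inter_add_card hQ
  rw [sum_deg_eq_sum_card_inter] at hrow
  rw [hp.card_eq hQ] at hsplit
  omega

theorem exists_part_eq_deg_eq_three (hp : Partite 6 part E) (hi : Intersecting E) (h8 : #E = 8)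
    (hτ : coverNum E = 4) (i : Fin 6) : ∃ v, part v = i ∧ deg E v = 3 := by
  classical
  by_contra! hi3
  set T := {v ∈ vertices E | deg E v = 3}
  have hT : ∀ t ∈ T, deg E t = 3 := fun t ht => (mem_filter.1 ht).2
  have hcov : ∀ e ∈ E, ∃ t ∈ T, t ∈ e := fun e he => by
    obtain ⟨v, hv, h3⟩ := exists_mem_deg_eq_three hp hi h8 hτ he
    exact ⟨v, mem_filter.2 ⟨mem_vertices.2 ⟨e, he, hv⟩, h3⟩, hv⟩
  have h4 : 4 ≤ #T := hτ ▸ coverNum_le_card hcov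
  have h5 : #T ≤ 5 := by
    have hinj : Set.InjOn part T := fun u hu v hv huv =>
      eq_of_deg_eq_three_of_part_eq hp hi h8 hτ (hT u hu) (hT v hv) huv
    calc #T = #(T.image part) := (card_image_of_injOn hinj).symm
      _ ≤ #(univ.erase i) := card_le_card fun j hj => by
        obtain ⟨t, ht, rfl⟩ := mem_image.1 hj
        exact mem_erase.2 ⟨fun h => hi3 t h (hT t ht), mem_univ _⟩
      _ = 5 := by simp
  have := six_le_card_of_deg_eq_three h8 hT
    (fun t ht u hu => exists_mem_mem_of_deg_eq_three hi h8 hτ (hT t ht) (hT u hu))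
    (fun e he => by
      obtain ⟨t, ht, hte⟩ := hcov e he
      exact card_pos.2 ⟨t, mem_inter.2 ⟨ht, hte⟩⟩)
    (fun e he => card_inter_le_three hp hi h8 hτ hi3 hT he) h4
  omega

end SixPartite

end

theorem stmt5 {V : Type*} (part : V → Fin 6) (E : Finset (Finset V))
    (hp : Partite 6 part E) (hi : Intersecting E) (h8 : E.card = 8)
    (hτ : coverNum E = 4) :
    ∀ i : Fin 6, ∃! v : V, part v = i ∧ deg E v = 3 := by
  intro i
  obtain ⟨v, hv⟩ := exists_part_eq_deg_eq_three hp hi h8 hτ i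
  exact ⟨v, hv, fun u hu =>
    eq_of_deg_eq_three_of_part_eq hp hi h8 hτ hu.2 hv.2 (hu.1.trans hv.1.symm)⟩
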